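/- arXiv:1904.09322 — 10 statements merged into one kernel-verified Lean document; each statement's English description precedes it below -/
import Mathlib

section
/- Let C be an adhesive, balanced category with epi–mono factorizations and effective unions. Let a₁ : A ⟶ B₁ and a₂ : A ⟶ B₂ be monomorphisms, let (d₁ : B₁ ⟶ D, d₂ : B₂ ⟶ D) be a pushout cocone of the span (a₁, a₂), and let e₁ : B₁ ⟶ E, e₂ : B₂ ⟶ E be monomorphisms with e₁ ∘ a₁ = e₂ ∘ a₂, so that there is a unique morphism e : D ⟶ E with e ∘ d₁ = e₁ and e ∘ d₂ = e₂. Assume moreover that the exterior square e₁ ∘ a₁ = e₂ ∘ a₂ is a pullback. Then e is an epimorphism if and only if the exterior square is a pushout, i.e. (e₁, e₂) is a pushout cocone of the span (a₁, a₂). -/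
open CategoryTheory CategoryTheory.Limits

universe v u


/-- A category has *epi–mono factorizations* if every morphism factors as an epimorphism
followed by a monomorphism. -/
def HasEpiMonoFactorizations (𝒞 : Type u) [Category.{v} 𝒞] : Prop :=
  ∀ {X Y : 𝒞} (f : X ⟶ Y), ∃ (E : 𝒞) (e : X ⟶ E) (m : E ⟶ Y), Epi e ∧ Mono m ∧ e ≫ m = f

/-- A category has *effective unions* if for every pushout square of monomorphisms
`bc`, `e`, `f` and all monomorphisms `b`, `c` forming with `bc` a pullback
square, the unique mediating morphism `d` with `e ≫ d = b` and `f ≫ d = c` is a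
monomorphism. -/
def HasEffectiveUnions (𝒞 : Type u) [Category.{v} 𝒞] : Prop :=
  ∀ {A B C D E : 𝒞} (b' : A ⟶ B) (c' : A ⟶ C) (e : B ⟶ D) (f : C ⟶ D)
    (b : B ⟶ E) (c : C ⟶ E) (d : D ⟶ E),
    Mono b' → Mono c' → Mono e → Mono f → Mono b → Mono c →
    IsPushout b' c' e f → IsPullback b' c' b c →
    e ≫ d = b → f ≫ d = c → Mono d

theorem CategoryTheory.IsPushout.isIso_iff_isPushout_comp {𝒞 : Type u} [Category.{v} 𝒞] {Z X Y P Q : 𝒞}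
    {f : Z ⟶ X} {g : Z ⟶ Y} {inl : X ⟶ P} {inr : Y ⟶ P} (hpo : IsPushout f g inl inr)
    (e : P ⟶ Q) : IsIso e ↔ IsPushout f g (inl ≫ e) (inr ≫ e) := by
  constructor
  · intro _
    exact hpo.of_iso (Iso.refl _) (Iso.refl _) (Iso.refl _) (asIso e)
      (by simp) (by simp) (by simp) (by simp)
  · intro h
    have he : e = (hpo.isoIsPushout _ _ h).hom :=
      hpo.hom_ext (by rw [IsPushout.inl_isoIsPushout_hom]) (by rw [IsPushout.inr_isoIsPushout_hom])
    rw [he]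
    infer_instance

theorem HasEffectiveUnions.mono_of_isPushout {𝒞 : Type u} [Category.{v} 𝒞] [Adhesive 𝒞]
    (heu : HasEffectiveUnions 𝒞) {A B₁ B₂ D E : 𝒞}
    {a₁ : A ⟶ B₁} {a₂ : A ⟶ B₂} [Mono a₁] [Mono a₂]
    {d₁ : B₁ ⟶ D} {d₂ : B₂ ⟶ D} (hpo : IsPushout a₁ a₂ d₁ d₂)
    {e₁ : B₁ ⟶ E} {e₂ : B₂ ⟶ E} [Mono e₁] [Mono e₂] (hpb : IsPullback a₁ a₂ e₁ e₂)
    {e : D ⟶ E} (he₁ : d₁ ≫ e = e₁) (he₂ : d₂ ≫ e = e₂) : Mono e :=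
  heu a₁ a₂ d₁ d₂ e₁ e₂ e inferInstance inferInstance
    (Adhesive.mono_of_isPushout_of_mono_right hpo) (Adhesive.mono_of_isPushout_of_mono_left hpo)
    inferInstance inferInstance hpo hpb he₁ he₂

theorem epi_mediating_iff_exterior_isPushout_general {𝒞 : Type u} [Category.{v} 𝒞]
    [Adhesive 𝒞] [Balanced 𝒞]
    (heu : HasEffectiveUnions 𝒞)
    {A B₁ B₂ D E : 𝒞}
    (a₁ : A ⟶ B₁) (a₂ : A ⟶ B₂) [Mono a₁] [Mono a₂]
    (d₁ : B₁ ⟶ D) (d₂ : B₂ ⟶ D) (hpo : IsPushout a₁ a₂ d₁ d₂)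
    (e₁ : B₁ ⟶ E) (e₂ : B₂ ⟶ E) [Mono e₁] [Mono e₂]
    (e : D ⟶ E) (he₁ : d₁ ≫ e = e₁) (he₂ : d₂ ≫ e = e₂)
    (hpb : IsPullback a₁ a₂ e₁ e₂) :
    Epi e ↔ IsPushout a₁ a₂ e₁ e₂ := by
  have : Mono e := heu.mono_of_isPushout hpo hpb he₁ he₂
  calc Epi e ↔ IsIso e := by simp [isIso_iff_mono_and_epi e, this]
    _ ↔ IsPushout a₁ a₂ (d₁ ≫ e) (d₂ ≫ e) := hpo.isIso_iff_isPushout_comp e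
    _ ↔ IsPushout a₁ a₂ e₁ e₂ := by rw [he₁, he₂]

/-- In an adhesive, balanced category with epi–mono factorizations and effective unions:
given a pushout `(d₁, d₂)` of a span of monomorphisms `(a₁, a₂)`, monomorphisms
`e₁, e₂` with `e₁ ∘ a₁ = e₂ ∘ a₂` forming a pullback square, and the mediating morphism
`e : D ⟶ E`, the morphism `e` is an epimorphism if and only if the exterior square
`(e₁, e₂)` is a pushout of the span `(a₁, a₂)`. -/
theorem epi_mediating_iff_exterior_isPushout {𝒞 : Type u} [Category.{v} 𝒞]
    [Adhesive 𝒞] [Balanced 𝒞]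
    (hfact : HasEpiMonoFactorizations 𝒞) (heu : HasEffectiveUnions 𝒞)
    {A B₁ B₂ D E : 𝒞}
    (a₁ : A ⟶ B₁) (a₂ : A ⟶ B₂) [Mono a₁] [Mono a₂]
    (d₁ : B₁ ⟶ D) (d₂ : B₂ ⟶ D) (hpo : IsPushout a₁ a₂ d₁ d₂)
    (e₁ : B₁ ⟶ E) (e₂ : B₂ ⟶ E) [Mono e₁] [Mono e₂]
    (e : D ⟶ E) (he₁ : d₁ ≫ e = e₁) (he₂ : d₂ ≫ e = e₂)
    (hpb : IsPullback a₁ a₂ e₁ e₂) :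
    Epi e ↔ IsPushout a₁ a₂ e₁ e₂ :=
  epi_mediating_iff_exterior_isPushout_general heu a₁ a₂ d₁ d₂ hpo e₁ e₂ e he₁ he₂ hpb
end

section
/- Let C be an adhesive category with epi–mono factorizations and effective unions. Consider morphisms z : Z' ⟶ Z, w : Z ⟶ Y, w' : Z' ⟶ Y', y : Y' ⟶ Y with w ∘ z = y ∘ w' (top square), and v : Y ⟶ X, v' : Y' ⟶ X', x : X' ⟶ X with v ∘ y = x ∘ v' (bottom square). Assume that z, w, w', y, v', x and the composite v ∘ w are all monomorphisms, that the top square is a pushout (i.e. (w, y) is a pushout cocone of the span (z, w')), and that (x, v' ∘ w') is a final pullback complement of (v ∘ w, z). Then (x, v') is a final pullback complement of (v, y), and v is a monomorphism. -/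
/-!
Since `v'` is a monomorphism, the pullback square of the composite FPC stays a pullback when
`v'` is moved to the other side: `(z, w', w ≫ v, v' ≫ x)` is a pullback. This square together
with the top pushout is exactly the input of effective unions, so the mediating map `v` is
mono. Pulling the top pushout back along a generalized element of the cospan `(v, x)` gives,
by the van Kampen property, a pushout over that element; its two legs glue to a lift into `Y'`,
so the bottom square is a pullback. Finally, a pullback of `v` is reached by pulling back
`w ≫ v` and factoring through the top pullback square, which transfers the FPC property of the
composite to the bottom square.
-/

open CategoryTheory CategoryTheory.Limits

universe v u


/-- Given morphisms `a : A ⟶ B` and `c : B ⟶ C`, the pair `(d : D ⟶ C, b : A ⟶ D)` is a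
*final pullback complement* of `(c, a)` if the square `a ≫ c = b ≫ d` is a pullback and
for every pullback square `x ≫ c = y ≫ z` and every `w : P ⟶ A` with `w ≫ a = x`,
there is a unique `w* : Q ⟶ D` with `w* ≫ d = z` and `y ≫ w* = w ≫ b`. -/
structure IsFinalPullbackComplement {𝒞 : Type u} [Category.{v} 𝒞] {A B C D : 𝒞}
    (a : A ⟶ B) (c : B ⟶ C) (b : A ⟶ D) (d : D ⟶ C) : Prop where
  isPullback : CategoryTheory.IsPullback a b c d
  universal : ∀ {P Q : 𝒞} (x : P ⟶ B) (y : P ⟶ Q) (z : Q ⟶ C),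
    CategoryTheory.IsPullback x y c z → ∀ (w : P ⟶ A), w ≫ a = x →
      ∃! wStar : Q ⟶ D, wStar ≫ d = z ∧ y ≫ wStar = w ≫ b

section

variable {𝒞 : Type u} [Category.{v} 𝒞]

theorem CategoryTheory.IsPullback.of_mono_fst_of_exists_lift {P X Y Z : 𝒞} {fst : P ⟶ X}
    {snd : P ⟶ Y} {f : X ⟶ Z} {g : Y ⟶ Z} [Mono fst] (sq : CommSq fst snd f g)
    (h : ∀ (T : 𝒞) (a : T ⟶ X) (b : T ⟶ Y), a ≫ f = b ≫ g →
      ∃ l : T ⟶ P, l ≫ fst = a ∧ l ≫ snd = b) :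
    IsPullback fst snd f g := by
  choose l hl₁ hl₂ using h
  refine IsPullback.of_isLimit' sq
    (PullbackCone.IsLimit.mk _ (fun s => l _ s.fst s.snd s.condition) (fun s => hl₁ _ _ _ _)
      (fun s => hl₂ _ _ _ _) fun s m hm₁ _ => ?_)
  rw [← cancel_mono fst, hm₁, hl₁]

variable {Z' Z Y' Y X' X : 𝒞} {z : Z' ⟶ Z} {w : Z ⟶ Y} {w' : Z' ⟶ Y'} {y : Y' ⟶ Y}
  {v : Y ⟶ X} {v' : Y' ⟶ X'} {x : X' ⟶ X}

theorem CategoryTheory.Adhesive.isPullback_of_isPushout_of_isPullback_comp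
    [Adhesive 𝒞] [Mono z] [Mono w] [Mono x] (htop : IsPushout z w' w y)
    (hout : IsPullback z (w' ≫ v') (w ≫ v) x) (hbot : y ≫ v = v' ≫ x) :
    IsPullback y v' v x := by
  have : Mono y := Adhesive.mono_of_isPushout_of_mono_left htop
  refine IsPullback.of_mono_fst_of_exists_lift ⟨hbot⟩ fun T a b hab => ?_
  have : HasPullback (pullback.fst w a) z := hasPullback_symmetry _ _
  obtain ⟨W, f', g', αW, hf, hg, hpo⟩ := (Adhesive.van_kampen htop).exists_cube_filling
    (IsPullback.of_hasPullback w a).flip (IsPullback.of_hasPullback y a).flip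
  let k : pullback w a ⟶ Z' := hout.lift (pullback.fst w a) (pullback.snd w a ≫ b)
    (by rw [pullback.condition_assoc, hab, Category.assoc])
  have hk : f' ≫ k = αW := by rw [← cancel_mono z, Category.assoc, hout.lift_fst, hf.w]
  let u : T ⟶ Y' := hpo.desc (k ≫ w') (pullback.fst y a) (by rw [reassoc_of% hk, hg.w])
  have hu : u ≫ y = a := by
    refine hpo.hom_ext ?_ ?_
    · rw [hpo.inl_desc_assoc, Category.assoc, ← htop.w, hout.lift_fst_assoc,
        pullback.condition]
    · rw [hpo.inr_desc_assoc, pullback.condition]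
  refine ⟨u, hu, ?_⟩
  rw [← cancel_mono x, Category.assoc, ← hbot, reassoc_of% hu, hab]

theorem IsFinalPullbackComplement.of_comp_of_isPullback [HasPullbacksAlong (w ≫ v)] [Mono x]
    (hcomp : IsFinalPullbackComplement z (w ≫ v) (w' ≫ v') x)
    (htop : IsPullback z w' w y) (hbot : IsPullback y v' v x) :
    IsFinalPullbackComplement y v v' x where
  isPullback := hbot
  universal := by
    intro P Q p q r hpqr w₀ hw₀
    have hR := (IsPullback.of_hasPullback r (w ≫ v)).flip
    -- the pullback of `w ≫ v` along `r` factors through `P`, and then through `Z'`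
    let s₀ : pullback r (w ≫ v) ⟶ P :=
      hpqr.lift (pullback.snd r (w ≫ v) ≫ w) (pullback.fst r (w ≫ v)) (by simpa using hR.w)
    let t₀ : pullback r (w ≫ v) ⟶ Z' :=
      htop.lift (pullback.snd r (w ≫ v)) (s₀ ≫ w₀)
        (by rw [Category.assoc, hw₀, hpqr.lift_fst])
    have hs₀ : s₀ ≫ q = pullback.fst r (w ≫ v) := hpqr.lift_snd _ _ _
    have ht₀ : t₀ ≫ w' = s₀ ≫ w₀ := htop.lift_snd _ _ _
    obtain ⟨ws, ⟨hws, -⟩, huniq⟩ := hcomp.universal _ _ r hR t₀ (htop.lift_fst _ _ _)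
    refine ⟨ws, ⟨hws, ?_⟩, fun u ⟨hu₁, hu₂⟩ => huniq u ⟨hu₁, ?_⟩⟩
    · rw [← cancel_mono x, Category.assoc, hws, ← hpqr.w, ← hw₀, Category.assoc, hbot.w,
        Category.assoc]
    · rw [← hs₀, Category.assoc, hu₂, ← reassoc_of% ht₀]

end

theorem fpc_vertical_pushout_decomp_general {𝒞 : Type u} [Category.{v} 𝒞] [Adhesive 𝒞]
    (heu : HasEffectiveUnions 𝒞)
    {Z' Z Y' Y X' X : 𝒞}
    (z : Z' ⟶ Z) (w : Z ⟶ Y) (w' : Z' ⟶ Y') (y : Y' ⟶ Y)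
    (v : Y ⟶ X) (v' : Y' ⟶ X') (x : X' ⟶ X)
    (hbot : y ≫ v = v' ≫ x)
    [Mono z] [Mono w] [Mono w'] [Mono y] [Mono v'] [Mono x] (hvw : Mono (w ≫ v))
    (htop : IsPushout z w' w y)
    (hcomp : IsFinalPullbackComplement z (w ≫ v) (w' ≫ v') x) :
    IsFinalPullbackComplement y v v' x ∧ Mono v := by
  have hout : IsPullback z (w' ≫ v') (w ≫ v) x := hcomp.isPullback
  have hunion : IsPullback z w' (w ≫ v) (v' ≫ x) := by
    simpa using ((IsPullback.of_vert_isIso_mono (fst := w') (snd := 𝟙 Z') (f := v')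
      (g := w' ≫ v') ⟨by simp⟩).paste_vert hout.flip).flip
  have : HasPullbacksAlong (w ≫ v) := fun r => hasPullback_symmetry _ _
  refine ⟨hcomp.of_comp_of_isPullback (Adhesive.isPullback_of_isPushout_of_mono_left htop)
    (Adhesive.isPullback_of_isPushout_of_isPullback_comp htop hout hbot), ?_⟩
  exact heu z w' w y (w ≫ v) (v' ≫ x) v inferInstance inferInstance inferInstance inferInstance
    hvw (mono_comp _ _) htop hunion rfl hbot

/-- Vertical FPC–pushout decomposition: in an adhesive category with epi–mono
factorizations and effective unions, if `z`, `w`, `w'`, `y`, `v'`, `x` and `w ≫ v` are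
monomorphisms, the top square is a pushout and `(x, v' ∘ w')` is a final pullback
complement of `(v ∘ w, z)`, then `(x, v')` is a final pullback complement of `(v, y)`
and `v` is a monomorphism. -/
theorem fpc_vertical_pushout_decomp {𝒞 : Type u} [Category.{v} 𝒞] [Adhesive 𝒞]
    (hfact : HasEpiMonoFactorizations 𝒞) (heu : HasEffectiveUnions 𝒞)
    {Z' Z Y' Y X' X : 𝒞}
    (z : Z' ⟶ Z) (w : Z ⟶ Y) (w' : Z' ⟶ Y') (y : Y' ⟶ Y)
    (v : Y ⟶ X) (v' : Y' ⟶ X') (x : X' ⟶ X)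
    (hbot : y ≫ v = v' ≫ x)
    [Mono z] [Mono w] [Mono w'] [Mono y] [Mono v'] [Mono x] (hvw : Mono (w ≫ v))
    (htop : IsPushout z w' w y)
    (hcomp : IsFinalPullbackComplement z (w ≫ v) (w' ≫ v') x) :
    IsFinalPullbackComplement y v v' x ∧ Mono v :=
  fpc_vertical_pushout_decomp_general heu z w w' y v v' x hbot hvw htop hcomp
end

section
/- Let C be an adhesive category with a strict initial object ∅ such that every morphism out of ∅ is a monomorphism, and with binary coproducts. Let f : Z ⟶ X ⨿ Y be a monomorphism. Let V, with projections v : V ⟶ X and ι_V : V ⟶ Z, be a pullback of the cospan (inl : X ⟶ X ⨿ Y, f), and let W, with projections w : W ⟶ Y and ι_W : W ⟶ Z, be a pullback of the cospan (inr : Y ⟶ X ⨿ Y, f). Then the cofan with injections ι_V : V ⟶ Z and ι_W : W ⟶ Z exhibits Z as a coproduct of V and W; consequently Z ≅ V ⨿ W, and under this isomorphism f corresponds to v ⨿ w (where v and w are monomorphisms). -/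
open CategoryTheory CategoryTheory.Limits

universe v u

/-! Since `∅ ⟶ X` is mono, the coproduct square `∅ → X, ∅ → Y, inl, inr` is a pushout along a
monomorphism, hence van Kampen. Pulling it back along `f` gives a cube whose back faces are
pullbacks because `∅` is strict, so the top face `∅ → V, ∅ → W, ιV, ιW` is a pushout. -/

section

variable {𝒞 : Type u} [Category.{v} 𝒞] [HasInitial 𝒞]

lemma isPullback_initial_to_of_hasStrictInitialObjects [HasStrictInitialObjects 𝒞]
    {A B : 𝒞} (m : A ⟶ B) :
    IsPullback (initial.to A) (𝟙 (⊥_ 𝒞)) m (initial.to B) := by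
  refine IsPullback.of_isLimit' ⟨initial.hom_ext _ _⟩ ?_
  refine PullbackCone.IsLimit.mk _ (fun s => s.snd) (fun s => ?_) (fun s => by simp)
    (fun s m' _ h₂ => by simpa using h₂)
  exact (IsInitial.ofStrict s.snd initialIsInitial).hom_ext _ _

variable [Adhesive 𝒞] [HasStrictInitialObjects 𝒞] [InitialMonoClass 𝒞]

lemma isPushout_initial_to_of_isPullback_coprod {X Y Z V W : 𝒞} [HasBinaryCoproduct X Y]
    {f : Z ⟶ X ⨿ Y} {v : V ⟶ X} {ιV : V ⟶ Z} {w : W ⟶ Y} {ιW : W ⟶ Z}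
    (hV : IsPullback v ιV coprod.inl f) (hW : IsPullback w ιW coprod.inr f) :
    IsPushout (initial.to V) (initial.to W) ιV ιW :=
  (Adhesive.van_kampen (IsPushout.of_hasBinaryCoproduct' X Y) _ _ _ _ (𝟙 _) v w f
    (isPullback_initial_to_of_hasStrictInitialObjects v)
    (isPullback_initial_to_of_hasStrictInitialObjects w)
    hV.flip.toCommSq hW.flip.toCommSq ⟨initial.hom_ext _ _⟩).mpr ⟨hV.flip, hW.flip⟩

lemma isColimit_binaryCofan_of_isPullback_coprod {X Y Z V W : 𝒞} [HasBinaryCoproduct X Y]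
    {f : Z ⟶ X ⨿ Y} {v : V ⟶ X} {ιV : V ⟶ Z} {w : W ⟶ Y} {ιW : W ⟶ Z}
    (hV : IsPullback v ιV coprod.inl f) (hW : IsPullback w ιW coprod.inr f) :
    Nonempty (IsColimit (BinaryCofan.mk ιV ιW)) :=
  ⟨isCoproductOfIsInitialIsPushout ιV ιW _ _ initialIsInitial
    (isPushout_initial_to_of_isPullback_coprod hV hW).isColimit⟩

end

/-- In an adhesive category with a strict initial object whose outgoing morphisms are
monomorphisms, and with binary coproducts: for a monomorphism `f : Z ⟶ X ⨿ Y`, with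
`V` the pullback of `f` along `inl` and `W` the pullback of `f` along `inr`, the
cofan with injections `ιV : V ⟶ Z`, `ιW : W ⟶ Z` exhibits `Z` as the coproduct
`V ⨿ W`, and the restricted morphisms `v : V ⟶ X`, `w : W ⟶ Y` are monomorphisms
(so that under the induced isomorphism `Z ≅ V ⨿ W`, `f` corresponds to `v ⨿ w`). -/
theorem mono_into_coprod_decomposes {𝒞 : Type u} [Category.{v} 𝒞]
    [Adhesive 𝒞] [HasInitial 𝒞] [HasStrictInitialObjects 𝒞] [InitialMonoClass 𝒞]
    [HasBinaryCoproducts 𝒞]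
    {X Y Z V W : 𝒞} (f : Z ⟶ X ⨿ Y) [Mono f]
    (v : V ⟶ X) (ιV : V ⟶ Z) (hV : IsPullback v ιV coprod.inl f)
    (w : W ⟶ Y) (ιW : W ⟶ Z) (hW : IsPullback w ιW coprod.inr f) :
    Nonempty (IsColimit (BinaryCofan.mk ιV ιW)) ∧ Mono v ∧ Mono w :=
  ⟨isColimit_binaryCofan_of_isPullback_coprod hV hW, hV.mono_fst_of_mono, hW.mono_fst_of_mono⟩
end

section
/- Every balanced adhesive category with epi–mono factorizations has effective unions: for every pushout square of monomorphisms b' : A ⟶ B, c' : A ⟶ C, e : B ⟶ D, f : C ⟶ D (so (e, f) is a pushout cocone of the span (b', c')) and for all monomorphisms b : B ⟶ E, c : C ⟶ E with b ∘ b' = c ∘ c' such that this exterior square is a pullback, the unique mediating morphism d : D ⟶ E with d ∘ e = b and d ∘ f = c is a monomorphism. -/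
/-!
The pullback square identifies `A` with `pullback b c`, hence `D` with the pushout of the two
pullback projections and `d` with the comparison map `pushout.desc b c _`; in an adhesive
category that map is a monomorphism (Lack–Sobociński, `Adhesive.desc_mono_of_mono`).
-/

open CategoryTheory CategoryTheory.Limits

universe v u

theorem Adhesive.mono_of_isPushout_of_isPullback {𝒞 : Type u} [Category.{v} 𝒞] [Adhesive 𝒞]
    {A B C D E : 𝒞} {b' : A ⟶ B} {c' : A ⟶ C} {e : B ⟶ D} {f : C ⟶ D}
    {b : B ⟶ E} {c : C ⟶ E} {d : D ⟶ E} [Mono b] [Mono c]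
    (H : IsPushout b' c' e f) (HP : IsPullback b' c' b c) (he : e ≫ d = b) (hf : f ≫ d = c) :
    Mono d := by
  have H' : IsPushout (pullback.fst b c) (pullback.snd b c) e f :=
    H.of_iso HP.isoPullback (Iso.refl _) (Iso.refl _) (Iso.refl _)
      (by simp) (by simp) (by simp) (by simp)
  have hd : d = H'.isoPushout.hom ≫ pushout.desc b c pullback.condition :=
    H.hom_ext (by simp [he, pushout.inl_desc]) (by simp [hf, pushout.inr_desc])
  rw [hd]
  infer_instance

theorem effectiveUnions_of_balanced_adhesive_general {𝒞 : Type u} [Category.{v} 𝒞]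
    [Adhesive 𝒞] :
    ∀ {A B C D E : 𝒞} (b' : A ⟶ B) (c' : A ⟶ C) (e : B ⟶ D) (f : C ⟶ D)
      (b : B ⟶ E) (c : C ⟶ E) (d : D ⟶ E),
      Mono b' → Mono c' → Mono e → Mono f → Mono b → Mono c →
      IsPushout b' c' e f → IsPullback b' c' b c →
      e ≫ d = b → f ≫ d = c → Mono d := by
  intro A B C D E b' c' e f b c d _ _ _ _ _ _ H HP he hf
  exact Adhesive.mono_of_isPushout_of_isPullback H HP he hf

/-- Every balanced adhesive category with epi–mono factorizations has effective unions:
for every pushout square of monomorphisms `b' : A ⟶ B`, `c' : A ⟶ C`, `e : B ⟶ D`,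
`f : C ⟶ D` and all monomorphisms `b : B ⟶ E`, `c : C ⟶ E` with `b ∘ b' = c ∘ c'`
forming a pullback square, the unique mediating morphism `d : D ⟶ E` with `d ∘ e = b`
and `d ∘ f = c` is a monomorphism. -/
theorem effectiveUnions_of_balanced_adhesive {𝒞 : Type u} [Category.{v} 𝒞]
    [Adhesive 𝒞] [Balanced 𝒞]
    (hfact : ∀ {X Y : 𝒞} (f : X ⟶ Y),
      ∃ (E : 𝒞) (e : X ⟶ E) (m : E ⟶ Y), Epi e ∧ Mono m ∧ e ≫ m = f) :
    ∀ {A B C D E : 𝒞} (b' : A ⟶ B) (c' : A ⟶ C) (e : B ⟶ D) (f : C ⟶ D)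
      (b : B ⟶ E) (c : C ⟶ E) (d : D ⟶ E),
      Mono b' → Mono c' → Mono e → Mono f → Mono b → Mono c →
      IsPushout b' c' e f → IsPullback b' c' b c →
      e ≫ d = b → f ≫ d = c → Mono d :=
  effectiveUnions_of_balanced_adhesive_general
end

section
/- (Horizontal FPC composition and decomposition.) In any category, consider morphisms e : C ⟶ B, d : B ⟶ A, vertical morphisms a : A ⟶ A', b : B ⟶ B', c : C ⟶ C', and bottom morphisms d' : B' ⟶ A', e' : C' ⟶ B', with a ∘ d = d' ∘ b and b ∘ e = e' ∘ c. If (d', b) is a final pullback complement of (a, d), then (d' ∘ e', c) is a final pullback complement of (a, d ∘ e) if and only if (e', c) is a final pullback complement of (b, e). -/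
/-!
Both directions rest on pullback pasting and the universal property of the right-hand FPC.
For composition: a pullback of `a` along `z`, with `w` factoring its top through `e ≫ d`, is split by
the mediating map `u` of the right FPC into two squares, the left one a pullback of `b` along `u`
(by `IsPullback.of_right`), to which the left FPC applies. For decomposition: a pullback of `b`,
pasted with the right square, is a pullback of `a`; the mediating map of the composite FPC,
followed by `e'`, and the given side of the pullback both mediate through the right FPC, hence agree.
-/

open CategoryTheory CategoryTheory.Limits

universe v u

namespace IsFinalPullbackComplement

variable {𝒞 : Type u} [Category.{v} 𝒞] {A B C A' B' C' : 𝒞}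
  {e : C ⟶ B} {d : B ⟶ A} {a : A ⟶ A'} {b : B ⟶ B'} {c : C ⟶ C'}
  {d' : B' ⟶ A'} {e' : C' ⟶ B'}

theorem paste_horiz (hl : IsFinalPullbackComplement e b c e')
    (hr : IsFinalPullbackComplement d a b d') :
    IsFinalPullbackComplement (e ≫ d) a c (e' ≫ d') := by
  refine ⟨hl.isPullback.paste_horiz hr.isPullback, ?_⟩
  intro P Q x y z hpb w hw
  have hwe : (w ≫ e) ≫ d = x := by rw [Category.assoc, hw]
  obtain ⟨u, ⟨hu₁, hu₂⟩, hu⟩ := hr.universal x y z hpb (w ≫ e) hwe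
  have hleft : IsPullback (w ≫ e) y b u :=
    IsPullback.of_right (by rwa [hwe, hu₁]) hu₂.symm hr.isPullback
  obtain ⟨s, ⟨hs₁, hs₂⟩, hs⟩ := hl.universal (w ≫ e) y u hleft w rfl
  refine ⟨s, ⟨by rw [← Category.assoc, hs₁, hu₁], hs₂⟩, ?_⟩
  rintro t ⟨ht₁, ht₂⟩
  have hte' : t ≫ e' = u := hu (t ≫ e')
    ⟨by rw [Category.assoc, ht₁], by
      rw [← Category.assoc, ht₂, Category.assoc, ← hl.isPullback.w, Category.assoc]⟩
  exact hs t ⟨hte', ht₂⟩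

theorem of_right (H : IsFinalPullbackComplement (e ≫ d) a c (e' ≫ d'))
    (hright : e ≫ b = c ≫ e') (hr : IsFinalPullbackComplement d a b d') :
    IsFinalPullbackComplement e b c e' := by
  refine ⟨IsPullback.of_right H.isPullback hright hr.isPullback, ?_⟩
  intro P Q x y z hpb w hw
  have hpasted : IsPullback (x ≫ d) y a (z ≫ d') := hpb.paste_horiz hr.isPullback
  obtain ⟨u, ⟨hu₁, hu₂⟩, hu⟩ :=
    H.universal (x ≫ d) y (z ≫ d') hpasted w (by rw [← hw, Category.assoc])
  have hue' : u ≫ e' = z :=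
    (hr.universal (x ≫ d) y (z ≫ d') hpasted x rfl).unique
      ⟨by rw [Category.assoc, hu₁], by
        rw [← Category.assoc, hu₂, Category.assoc, ← hright, ← Category.assoc, hw]⟩
      ⟨rfl, hpb.w.symm⟩
  refine ⟨u, ⟨hue', hu₂⟩, ?_⟩
  rintro t ⟨ht₁, ht₂⟩
  exact hu t ⟨by rw [← Category.assoc, ht₁], ht₂⟩

end IsFinalPullbackComplement

theorem fpc_horizontal_comp_decomp_general {𝒞 : Type u} [Category.{v} 𝒞]
    {A B C A' B' C' : 𝒞}
    (e : C ⟶ B) (d : B ⟶ A) (a : A ⟶ A') (b : B ⟶ B') (c : C ⟶ C')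
    (d' : B' ⟶ A') (e' : C' ⟶ B')
    (hright : e ≫ b = c ≫ e')
    (h : IsFinalPullbackComplement d a b d') :
    IsFinalPullbackComplement (e ≫ d) a c (e' ≫ d') ↔
      IsFinalPullbackComplement e b c e' :=
  ⟨fun H => H.of_right hright h, fun H => H.paste_horiz h⟩

/-- Horizontal FPC composition and decomposition: given two horizontally pasted commuting
squares where the left square `(d', b)` is a final pullback complement of `(a, d)`,
the pasted square `(d' ≫ e', c)` is a final pullback complement of `(a, d ∘ e)` if and
only if the right square `(e', c)` is a final pullback complement of `(b, e)`. -/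
theorem fpc_horizontal_comp_decomp {𝒞 : Type u} [Category.{v} 𝒞]
    {A B C A' B' C' : 𝒞}
    (e : C ⟶ B) (d : B ⟶ A) (a : A ⟶ A') (b : B ⟶ B') (c : C ⟶ C')
    (d' : B' ⟶ A') (e' : C' ⟶ B')
    (hleft : d ≫ a = b ≫ d') (hright : e ≫ b = c ≫ e')
    (h : IsFinalPullbackComplement d a b d') :
    IsFinalPullbackComplement (e ≫ d) a c (e' ≫ d') ↔
      IsFinalPullbackComplement e b c e' :=
  fpc_horizontal_comp_decomp_general e d a b c d' e' hright h
end

section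
/- (Vertical FPC–pullback decomposition.) Let C be an adhesive category. Consider morphisms z : Z' ⟶ Z, w : Z ⟶ Y, w' : Z' ⟶ Y', y : Y' ⟶ Y with w ∘ z = y ∘ w', and morphisms v : Y ⟶ X, v' : Y' ⟶ X', x : X' ⟶ X with v ∘ y = x ∘ v'. If v is a monomorphism, the bottom square v ∘ y = x ∘ v' is a pullback, and (x, v' ∘ w') is a final pullback complement of (v ∘ w, z), then (y, w') is a final pullback complement of (w, z) and (x, v') is a final pullback complement of (v, y). -/
open CategoryTheory CategoryTheory.Limits

universe v u


/-!
Both halves come from the universal property of the composite FPC. For the top square, a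
pullback over `w` becomes one over `w ≫ v` after pasting with the trivial pullback of the mono
`v`, and the map into `X'` it yields lifts through the bottom pullback. For the bottom square,
given a pullback `P ⟶ Q` of `v` and `w₀ : P ⟶ Y'`, glue `Q` and `X'` along `P` into the
pushout `R`; by van Kampen the pullback of `v` along the induced `t : R ⟶ X` is still `Y'`, so
the composite FPC yields a retraction `R ⟶ X'` of `X' ⟶ R` over `X`, and the wanted map
`Q ⟶ X'` is its restriction to `Q`.
-/

variable {𝒞 : Type u} [Category.{v} 𝒞]

/-- By van Kampen, the pullback of `v` along `t` is the pushout of `𝟙 P` and `k`,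
that is `Y'`. -/
theorem Adhesive.isPullback_comp_inr_of_isPushout [Adhesive 𝒞] {P Q X' R X Y Y' : 𝒞}
    {f : P ⟶ Q} {g : P ⟶ X'} {inl : Q ⟶ R} {inr : X' ⟶ R} (hPO : IsPushout f g inl inr)
    [Mono f] {t : R ⟶ X} {v : Y ⟶ X} [Mono v] {p : P ⟶ Y} {q : Y' ⟶ Y} {g' : Y' ⟶ X'}
    {k : P ⟶ Y'} (hp : IsPullback p f v (inl ≫ t)) (hq : IsPullback q g' v (inr ≫ t))
    (hkg : k ≫ g' = g) (hkq : k ≫ q = p) :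
    IsPullback q (g' ≫ inr) v t := by
  have hE := IsPullback.of_hasPullback v t
  have : Mono g' := hq.mono_snd_of_mono
  let p' := hE.lift p (f ≫ inl) (by rw [hp.w, Category.assoc])
  let i := hE.lift q (g' ≫ inr) (by rw [hq.w, Category.assoc])
  have hp' : IsPullback p' f (pullback.snd v t) inl :=
    .of_right (by rwa [hE.lift_fst]) (hE.lift_snd _ _ _) hE
  have hi : IsPullback i g' (pullback.snd v t) inr :=
    .of_right (by rwa [hE.lift_fst]) (hE.lift_snd _ _ _) hE
  have hki : p' = k ≫ i := hE.hom_ext (by simp [p', i, hkq]) (by simp [p', i, ← hkg, hPO.w])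
  have hPO' : IsPushout (𝟙 P) k p' i :=
    (Adhesive.van_kampen hPO (𝟙 P) k p' i (𝟙 P) f g' (pullback.snd v t)
      (IsKernelPair.id_of_mono f) (.of_vert_isIso_mono ⟨by simp [hkg]⟩)
      hp'.toCommSq hi.toCommSq ⟨by simp [hki]⟩).mpr ⟨hp', hi⟩
  have : IsIso i := hPO'.isIso_inr_of_isIso
  exact .of_iso_pullback ⟨by rw [hq.w, Category.assoc]⟩ (asIso i) (hE.lift_fst _ _ _)
    (hE.lift_snd _ _ _)

theorem IsFinalPullbackComplement.existsUnique_retraction {A B C D R : 𝒞} {a : A ⟶ B}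
    {c : B ⟶ C} {b : A ⟶ D} {d : D ⟶ C} (h : IsFinalPullbackComplement a c b d)
    (i : D ⟶ R) (t : R ⟶ C) (hit : i ≫ t = d) (hpb : IsPullback a (b ≫ i) c t) :
    ∃! r : R ⟶ D, r ≫ d = t ∧ i ≫ r = 𝟙 D := by
  obtain ⟨r, ⟨hrd, hbr⟩, hr_uniq⟩ :=
    h.universal a (b ≫ i) t hpb (𝟙 A) (Category.id_comp a)
  have hendo : ∀ e : D ⟶ D, e ≫ d = d → b ≫ e = b → e = 𝟙 D := fun e hed hbe =>
    (h.universal a b d h.isPullback (𝟙 A) (Category.id_comp a)).unique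
      ⟨hed, by rw [hbe, Category.id_comp]⟩ ⟨Category.id_comp d, by simp⟩
  have hir : i ≫ r = 𝟙 D :=
    hendo _ (by rw [Category.assoc, hrd, hit]) (by simpa using hbr)
  exact ⟨r, ⟨hrd, hir⟩, fun r' ⟨hr'd, hir'⟩ => hr_uniq r' ⟨hr'd, by simp [hir']⟩⟩

section Decomposition

variable {Z' Z Y' Y X' X : 𝒞} {z : Z' ⟶ Z} {w : Z ⟶ Y} {w' : Z' ⟶ Y'} {y : Y' ⟶ Y}
  {v : Y ⟶ X} {v' : Y' ⟶ X'} {x : X' ⟶ X}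

theorem IsFinalPullbackComplement.of_comp_left [Mono v]
    (hcomp : IsFinalPullbackComplement z (w ≫ v) (w' ≫ v') x) (htop : z ≫ w = w' ≫ y)
    (hbot : IsPullback y v' v x) : IsFinalPullbackComplement z w w' y := by
  refine ⟨.of_bot hcomp.isPullback htop hbot, fun x₀ y₀ z₀ hsq w₀ hw₀ => ?_⟩
  have hsq' : IsPullback x₀ y₀ (w ≫ v) (z₀ ≫ v) := by
    simpa using hsq.paste_vert
      (IsPullback.of_vert_isIso_mono (snd := 𝟙 _) ⟨(Category.id_comp _).symm⟩)
  obtain ⟨u, ⟨hux, huy⟩, hu_uniq⟩ := hcomp.universal x₀ y₀ (z₀ ≫ v) hsq' w₀ hw₀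
  refine ⟨hbot.lift z₀ u hux.symm, ⟨hbot.lift_fst _ _ _, hbot.hom_ext ?_ ?_⟩, ?_⟩
  · simp [← hsq.w, ← hw₀, htop]
  · simp [huy]
  · rintro t ⟨hty, hyt⟩
    refine hbot.hom_ext (by simp [hty]) ?_
    rw [hbot.lift_snd]
    exact hu_uniq _
      ⟨by rw [Category.assoc, ← hbot.w, reassoc_of% hty], by simp [reassoc_of% hyt]⟩

theorem IsFinalPullbackComplement.of_comp_right [Adhesive 𝒞] [Mono v]
    (hcomp : IsFinalPullbackComplement z (w ≫ v) (w' ≫ v') x) (htop : z ≫ w = w' ≫ y)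
    (hbot : IsPullback y v' v x) : IsFinalPullbackComplement y v v' x := by
  refine ⟨hbot, fun x₀ y₀ z₀ hsq w₀ hw₀ => ?_⟩
  have : Mono y₀ := hsq.mono_snd_of_mono
  have hPO := IsPushout.of_hasPushout y₀ (w₀ ≫ v')
  let t := hPO.desc z₀ x (by rw [← hsq.w, ← hw₀, Category.assoc, Category.assoc, hbot.w])
  have hR : IsPullback y (v' ≫ pushout.inr _ _) v t :=
    Adhesive.isPullback_comp_inr_of_isPushout hPO (by rwa [hPO.inl_desc])
      (by rwa [hPO.inr_desc]) rfl hw₀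
  obtain ⟨m, ⟨hmx, hrm⟩, hm_uniq⟩ := hcomp.existsUnique_retraction _ t (hPO.inr_desc _ _ _)
    (by simpa using (IsPullback.of_bot hcomp.isPullback htop hbot).paste_vert hR)
  refine ⟨pushout.inl _ _ ≫ m, ⟨by simp [hmx, t], ?_⟩, fun u ⟨hux, hyu⟩ => ?_⟩
  · rw [← Category.assoc, hPO.w, Category.assoc, hrm, Category.comp_id]
  · have hm : hPO.desc u (𝟙 X') (by simp [hyu]) = m :=
      hm_uniq _ ⟨hPO.hom_ext (by simp [hux, t]) (by simp [t]), hPO.inr_desc _ _ _⟩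
    rw [← hm, hPO.inl_desc]

end Decomposition

/-- Vertical FPC–pullback decomposition in an adhesive category: if `v` is a monomorphism,
the bottom square `v ∘ y = x ∘ v'` is a pullback, the top square `w ∘ z = y ∘ w'` commutes,
and `(x, v' ∘ w')` is a final pullback complement of `(v ∘ w, z)`, then `(y, w')` is a
final pullback complement of `(w, z)` and `(x, v')` is a final pullback complement of
`(v, y)`. -/
theorem fpc_vertical_pullback_decomp {𝒞 : Type u} [Category.{v} 𝒞] [Adhesive 𝒞]
    {Z' Z Y' Y X' X : 𝒞}
    (z : Z' ⟶ Z) (w : Z ⟶ Y) (w' : Z' ⟶ Y') (y : Y' ⟶ Y)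
    (v : Y ⟶ X) (v' : Y' ⟶ X') (x : X' ⟶ X)
    (htop : z ≫ w = w' ≫ y)
    [Mono v]
    (hbotPB : IsPullback y v' v x)
    (hcomp : IsFinalPullbackComplement z (w ≫ v) (w' ≫ v') x) :
    IsFinalPullbackComplement z w w' y ∧ IsFinalPullbackComplement y v v' x :=
  ⟨hcomp.of_comp_left htop hbotPB, hcomp.of_comp_right htop hbotPB⟩
end

section
/- Let C be an adhesive category. Let a : A ⟶ B be a monomorphism and b : A ⟶ D an arbitrary morphism, and let (c : B ⟶ C, d : D ⟶ C) be a pushout cocone exhibiting C as the pushout of the span (a, b). Then the pushout square is also a final pullback complement: (d, b) is a final pullback complement of (c, a). -/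
open CategoryTheory CategoryTheory.Limits

universe v u

/-!
Since `d` is a monomorphism (pushouts preserve monos in an adhesive category), a morphism
`w* : Q ⟶ D` with `w* ≫ d = z` is unique if it exists, and then automatically satisfies
`y ≫ w* = w ≫ b`; so it suffices to show that `z` factors through `d`.
Pull the pushout square back along `z`. Over `A` and `B` the pullback is `P` itself (via `w`
and `x`, because `a` is mono), over `C` it is `Q`, and over `D` it is `D ×_C Q`. By the
van Kampen property the top face, with sides `𝟙 P`, `P ⟶ D ×_C Q`, `y` and the projection
`D ×_C Q ⟶ Q`, is again a pushout; as the pushout of an identity, that projection is an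
isomorphism, which gives the factorisation.
-/

variable {𝒞 : Type u} [Category.{v} 𝒞]

lemma IsFinalPullbackComplement.of_mono {A B C D : 𝒞} {a : A ⟶ B} {c : B ⟶ C} {b : A ⟶ D}
    {d : D ⟶ C} [Mono d] (hsq : IsPullback a b c d)
    (hfac : ∀ {P Q : 𝒞} (x : P ⟶ B) (y : P ⟶ Q) (z : Q ⟶ C), IsPullback x y c z →
      ∀ w : P ⟶ A, w ≫ a = x → ∃ l : Q ⟶ D, l ≫ d = z) :
    IsFinalPullbackComplement a c b d := by
  refine ⟨hsq, fun x y z hxy w hw => ?_⟩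
  obtain ⟨l, hl⟩ := hfac x y z hxy w hw
  refine ⟨l, ⟨hl, ?_⟩, fun l' hl' => ?_⟩
  · rw [← cancel_mono d, Category.assoc, hl, ← hxy.w, ← hw, Category.assoc, Category.assoc,
      hsq.w]
  · rw [← cancel_mono d, hl, hl'.1]

lemma IsPushout.IsVanKampen.isIso_pullback_snd {A B C D P Q : 𝒞} {a : A ⟶ B} {b : A ⟶ D}
    {c : B ⟶ C} {d : D ⟶ C} [Mono a] {H : IsPushout a b c d} (H' : H.IsVanKampen)
    {x : P ⟶ B} {y : P ⟶ Q} {z : Q ⟶ C} [HasPullback d z] (hxy : IsPullback x y c z)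
    {w : P ⟶ A} (hw : w ≫ a = x) :
    IsIso (pullback.snd d z) := by
  have hR := IsPullback.of_hasPullback d z
  let g : P ⟶ pullback d z :=
    pullback.lift (w ≫ b) y (by rw [Category.assoc, ← H.w, ← Category.assoc, hw, hxy.w])
  have hback : IsPullback (𝟙 P) w x a := .of_horiz_isIso_mono ⟨by simp [hw]⟩
  have hleft : IsPullback g w (pullback.fst d z) b := by
    refine .of_right ?_ (pullback.lift_fst _ _ _) hR.flip
    rw [pullback.lift_snd, ← H.w]
    simpa using hback.paste_horiz hxy.flip
  have htop : IsPushout (𝟙 P) g y (pullback.snd d z) :=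
    (H' _ _ _ _ _ _ _ _ hback hleft hxy.flip.toCommSq hR.flip.toCommSq
      ⟨by rw [Category.id_comp, pullback.lift_snd]⟩).mpr ⟨hxy.flip, hR.flip⟩
  exact htop.isIso_inr_of_isIso

/-- In an adhesive category, every pushout square along a monomorphism is also a final
pullback complement square: if `(c, d)` is a pushout cocone of the span `(a, b)` with `a`
a monomorphism, then `(d, b)` is a final pullback complement of `(c, a)`. -/
theorem isFinalPullbackComplement_of_isPushout {𝒞 : Type u} [Category.{v} 𝒞] [Adhesive 𝒞]
    {A B C D : 𝒞} (a : A ⟶ B) (b : A ⟶ D) (c : B ⟶ C) (d : D ⟶ C) [Mono a]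
    (h : IsPushout a b c d) :
    IsFinalPullbackComplement a c b d := by
  have : Mono d := Adhesive.mono_of_isPushout_of_mono_left h
  refine .of_mono (Adhesive.isPullback_of_isPushout_of_mono_left h) fun x y z hxy w hw => ?_
  have := IsPushout.IsVanKampen.isIso_pullback_snd (Adhesive.van_kampen h) hxy hw
  exact ⟨inv (pullback.snd d z) ≫ pullback.fst d z, by simp [pullback.condition]⟩
end

section
/- (Pushout–pullback decomposition in adhesive categories.) Let C be an adhesive category. Consider morphisms e : C ⟶ B, d : B ⟶ A, vertical morphisms a : A ⟶ A', b : B ⟶ B', c : C ⟶ C', and bottom morphisms d' : B' ⟶ A', e' : C' ⟶ B', with a ∘ d = d' ∘ b (left square) and b ∘ e = e' ∘ c (right square). If the outer pasted square (a ∘ d ∘ e = d' ∘ e' ∘ c) is a pushout, the left square is a pullback, d' is a monomorphism, and at least one of c and e is a monomorphism, then both the left square and the right square are pushouts (and hence also pullbacks). -/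
/-!
The outer pushout is along the monomorphism `c` or `e ≫ d`, hence van Kampen. Apply this to
the cube whose top face is the right square, whose bottom face is the outer square, and whose
vertical maps are `𝟙 C`, `d`, `𝟙 C'` and `d'`. Its back faces are pullbacks because `d` and `d'`
are monomorphisms and its left face is the given pullback, so the top face is a pushout.
Pushout cancellation then makes the left square a pushout, and in an adhesive category a
pushout along a monomorphism is a pullback.
-/

open CategoryTheory CategoryTheory.Limits

universe v u

namespace CategoryTheory.IsPushout.IsVanKampen

variable {𝒞 : Type u} [Category.{v} 𝒞] {A B C A' B' C' : 𝒞}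
  {e : C ⟶ B} {d : B ⟶ A} {a : A ⟶ A'} {b : B ⟶ B'} {c : C ⟶ C'} {d' : B' ⟶ A'} {e' : C' ⟶ B'}

theorem isPushout_right_of_isPullback_left {houter : IsPushout (e ≫ d) c a (e' ≫ d')}
    (vk : houter.IsVanKampen) (hright : e ≫ b = c ≫ e') (hleft : IsPullback d b a d')
    [Mono d'] : IsPushout e c b e' := by
  have : Mono d := hleft.mono_fst_of_mono
  have hback : IsPullback e (𝟙 C) d (e ≫ d) := IsPullback.of_vert_isIso_mono ⟨by simp⟩
  have hback' : IsPullback e' (𝟙 C') d' (e' ≫ d') := IsPullback.of_vert_isIso_mono ⟨by simp⟩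
  have hcube := vk e c b e' (𝟙 C) d (𝟙 C') d' hback
    (IsPullback.of_vert_isIso ⟨by simp⟩) ⟨hleft.w.symm⟩ ⟨by simp⟩ ⟨hright⟩
  exact hcube.mpr ⟨hleft.flip, hback'⟩

end CategoryTheory.IsPushout.IsVanKampen

/-- Pushout–pullback decomposition in an adhesive category: if the outer pasted square is
a pushout, the left square is a pullback, `d'` is a monomorphism, and at least one of
`c`, `e` is a monomorphism, then both the left and the right squares are pushouts (and
hence also pullbacks). -/
theorem pushout_pullback_decomposition {𝒞 : Type u} [Category.{v} 𝒞] [Adhesive 𝒞]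
    {A B C A' B' C' : 𝒞}
    (e : C ⟶ B) (d : B ⟶ A) (a : A ⟶ A') (b : B ⟶ B') (c : C ⟶ C')
    (d' : B' ⟶ A') (e' : C' ⟶ B')
    (hright : e ≫ b = c ≫ e')
    (houter : IsPushout (e ≫ d) c a (e' ≫ d'))
    (hleftPB : IsPullback d b a d')
    [Mono d'] (hmono : Mono c ∨ Mono e) :
    IsPushout d b a d' ∧ IsPushout e c b e' ∧
    IsPullback d b a d' ∧ IsPullback e c b e' := by
  have : Mono d := hleftPB.mono_fst_of_mono
  have vk : houter.IsVanKampen :=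
    hmono.elim (fun _ => Adhesive.van_kampen' houter) (fun _ => Adhesive.van_kampen houter)
  have hrightPO : IsPushout e c b e' := vk.isPushout_right_of_isPullback_left hright hleftPB
  have hrightPB : IsPullback e c b e' :=
    hmono.elim (fun _ => Adhesive.isPullback_of_isPushout_of_mono_right hrightPO)
      (fun _ => Adhesive.isPullback_of_isPushout_of_mono_left hrightPO)
  exact ⟨houter.of_left hleftPB.w hrightPO, hrightPO, hleftPB, hrightPB⟩
end

section
/- (Pullback–pushout decomposition.) Let C be an adhesive category. Consider morphisms e : C ⟶ B, d : B ⟶ A, vertical morphisms a : A ⟶ A', b : B ⟶ B', c : C ⟶ C', and bottom morphisms d' : B' ⟶ A', e' : C' ⟶ B', with a ∘ d = d' ∘ b (left square) and b ∘ e = e' ∘ c (right square). If the outer pasted square (a ∘ d ∘ e = d' ∘ e' ∘ c) is a pullback, the right square is a pushout, and a is a monomorphism, then the left square is a pullback. -/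
/-!
Factor the left square through the pullback `P` of `a` along `d'` by `k : B ⟶ P`, and let
`m : P ⟶ B'` be the (mono) projection. Since the outer square is a pullback, so is the square
`(e ≫ k) ≫ m = c ≫ e'`, and `k ≫ m = 𝟙 ≫ b` is a pullback because `m` is mono. These are the
side faces of a cube over the pushout of `e` along `c`, which is mono as a pullback of `a`, with
top face `e`, `𝟙 C`, `k`, `e ≫ k`. By the van Kampen property the top face is a pushout, and a
pushout of an identity is an isomorphism; so `k` is invertible and the left square is a pullback.
-/

open CategoryTheory CategoryTheory.Limits

universe v u

namespace CategoryTheory.Adhesive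

theorem isIso_of_isPushout_of_isPullback_of_mono {𝒞 : Type u} [Category.{v} 𝒞] [Adhesive 𝒞]
    {B C B' C' P : 𝒞} {e : C ⟶ B} {c : C ⟶ C'} {b : B ⟶ B'} {e' : C' ⟶ B'}
    (hpo : IsPushout e c b e') [Mono c] {k : B ⟶ P} {m : P ⟶ B'} [Mono m]
    (hk : k ≫ m = b) (hpb : IsPullback (e ≫ k) c m e') : IsIso k := by
  have hkb : IsPullback k (𝟙 B) m b :=
    (IsPullback.of_horiz_isIso_mono ⟨by simp [hk]⟩).flip
  have htop : IsPushout e (𝟙 C) k (e ≫ k) :=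
    (van_kampen' hpo e (𝟙 C) k (e ≫ k) (𝟙 C) (𝟙 B) c m (IsPullback.of_vert_isIso ⟨by simp⟩)
      (IsKernelPair.id_of_mono c) ⟨by simp [hk]⟩ ⟨hpb.w⟩ ⟨by simp⟩).mpr ⟨hkb, hpb⟩
  exact htop.isIso_inl_of_isIso

end CategoryTheory.Adhesive

/-- Pullback–pushout decomposition in an adhesive category: if the outer pasted square is
a pullback, the right square is a pushout, the left square commutes and `a` is a
monomorphism, then the left square is a pullback. -/
theorem pullback_pushout_decomposition {𝒞 : Type u} [Category.{v} 𝒞] [Adhesive 𝒞]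
    {A B C A' B' C' : 𝒞}
    (e : C ⟶ B) (d : B ⟶ A) (a : A ⟶ A') (b : B ⟶ B') (c : C ⟶ C')
    (d' : B' ⟶ A') (e' : C' ⟶ B')
    (hleft : d ≫ a = b ≫ d')
    (houter : IsPullback (e ≫ d) c a (e' ≫ d'))
    (hright : IsPushout e c b e')
    [Mono a] :
    IsPullback d b a d' := by
  have : Mono c := houter.mono_snd_of_mono
  let k : B ⟶ pullback a d' := pullback.lift d b hleft
  have hk₁ : k ≫ pullback.fst a d' = d := pullback.lift_fst _ _ _
  have hk₂ : k ≫ pullback.snd a d' = b := pullback.lift_snd _ _ _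
  have hpb : IsPullback (e ≫ k) c (pullback.snd a d') e' :=
    IsPullback.of_right (by rwa [Category.assoc, hk₁])
      (by rw [Category.assoc, hk₂]; exact hright.w) (IsPullback.of_hasPullback a d')
  have : IsIso k := Adhesive.isIso_of_isPushout_of_isPullback_of_mono hright hk₂ hpb
  exact IsPullback.of_iso_pullback ⟨hleft⟩ (asIso k) hk₁ hk₂
end

section
/- (Uniqueness of pushout complements along monomorphisms.) Let C be an adhesive category, let m : A ⟶ C be a monomorphism and g : C ⟶ D an arbitrary morphism. Suppose (f₁ : A ⟶ B₁, h₁ : B₁ ⟶ D) and (f₂ : A ⟶ B₂, h₂ : B₂ ⟶ D) are both pushout complements of (m, g), i.e. for i = 1, 2 the square g ∘ m = h_i ∘ f_i is a pushout (D is a pushout of the span (m : A ⟶ C, f_i : A ⟶ B_i) with cocone (g, h_i)). Then there exists an isomorphism φ : B₁ ≅ B₂ with φ ∘ f₁ = f₂ and h₂ ∘ φ = h₁. -/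
/-!
Let `P = B₁ ×_D B₂`. Both squares are pullbacks and `h₁, h₂` are monic, since pushouts along
monos in an adhesive category are. Over the van Kampen square `(m, f₂, g, h₂)` build the cube
with top face `(𝟙 A, t, f₁, p₁)`, where `t : A ⟶ P` is induced by `f₁, f₂`: its back faces are
pullbacks because `m` and `p₂` are monic, and its front faces are the pullback squares
`(f₁, m, h₁, g)` and `P`. So the top face is a pushout, and a pushout of `𝟙 A` is an
isomorphism; hence `p₁`, and symmetrically `p₂`, are isomorphisms, and `φ = p₁⁻¹ ≫ p₂`.
-/

open CategoryTheory CategoryTheory.Limits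

universe v u

theorem Adhesive.isIso_fst_of_isPullback_of_isPushout {𝒞 : Type u} [Category.{v} 𝒞]
    [Adhesive 𝒞] {A C D B₁ B₂ P : 𝒞} {m : A ⟶ C} [Mono m] {g : C ⟶ D}
    {f₁ : A ⟶ B₁} {h₁ : B₁ ⟶ D} {f₂ : A ⟶ B₂} {h₂ : B₂ ⟶ D} {p₁ : P ⟶ B₁} {p₂ : P ⟶ B₂}
    (hpo₁ : IsPushout m f₁ g h₁) (hpo₂ : IsPushout m f₂ g h₂) (hP : IsPullback p₁ p₂ h₁ h₂) :
    IsIso p₁ := by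
  have : Mono h₁ := Adhesive.mono_of_isPushout_of_mono_left hpo₁
  have : Mono p₂ := hP.mono_snd_of_mono
  let t : A ⟶ P := hP.lift f₁ f₂ (by rw [← hpo₁.w, hpo₂.w])
  have back_left : IsPullback (𝟙 A) (𝟙 A) m m := IsKernelPair.id_of_mono m
  have back_right : IsPullback t (𝟙 A) p₂ f₂ := IsPullback.of_vert_isIso_mono ⟨by simp [t]⟩
  have top : IsPushout (𝟙 A) t f₁ p₁ :=
    (Adhesive.van_kampen hpo₂ (𝟙 A) t f₁ p₁ (𝟙 A) m p₂ h₁ back_left back_right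
      hpo₁.toCommSq.flip hP.toCommSq ⟨by simp [t]⟩).mpr
      ⟨(Adhesive.isPullback_of_isPushout_of_mono_left hpo₁).flip, hP⟩
  exact top.isIso_inr_of_isIso

/-- Uniqueness of pushout complements along monomorphisms in an adhesive category: if
`(f₁, h₁)` and `(f₂, h₂)` are both pushout complements of `(m, g)` with `m` a
monomorphism, then there is an isomorphism `φ : B₁ ≅ B₂` compatible with the data. -/
theorem pushout_complement_unique {𝒞 : Type u} [Category.{v} 𝒞] [Adhesive 𝒞]
    {A C D B₁ B₂ : 𝒞} (m : A ⟶ C) [Mono m] (g : C ⟶ D)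
    (f₁ : A ⟶ B₁) (h₁ : B₁ ⟶ D) (f₂ : A ⟶ B₂) (h₂ : B₂ ⟶ D)
    (hpo₁ : IsPushout m f₁ g h₁) (hpo₂ : IsPushout m f₂ g h₂) :
    ∃ φ : B₁ ≅ B₂, f₁ ≫ φ.hom = f₂ ∧ φ.hom ≫ h₂ = h₁ := by
  have : Mono h₁ := Adhesive.mono_of_isPushout_of_mono_left hpo₁
  have : Mono h₂ := Adhesive.mono_of_isPushout_of_mono_left hpo₂
  have : HasPullback h₁ h₂ := Adhesive.hasPullback_of_mono_left h₁ h₂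
  have hP := IsPullback.of_hasPullback h₁ h₂
  have : IsIso (pullback.fst h₁ h₂) := Adhesive.isIso_fst_of_isPullback_of_isPushout hpo₁ hpo₂ hP
  have : IsIso (pullback.snd h₁ h₂) :=
    Adhesive.isIso_fst_of_isPullback_of_isPushout hpo₂ hpo₁ hP.flip
  have hφ : (inv (pullback.fst h₁ h₂) ≫ pullback.snd h₁ h₂) ≫ h₂ = h₁ := by
    rw [Category.assoc, ← pullback.condition, IsIso.inv_hom_id_assoc]
  refine ⟨(asIso (pullback.fst h₁ h₂)).symm ≪≫ asIso (pullback.snd h₁ h₂), ?_, hφ⟩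
  rw [← cancel_mono h₂]
  simp only [Iso.trans_hom, Iso.symm_hom, asIso_inv, asIso_hom, Category.assoc] at hφ ⊢
  rw [hφ, ← hpo₁.w, hpo₂.w]
end
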